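/- Let ζ ∈ ℂⁿ with ζ·ζ = 0, a : ℝⁿ → ℂ smooth, and m ≥ 1. If (ζ·∇)^m a = 0, then e^{-ix·ζ/h}(-h²Δ)^m(e^{ix·ζ/h} a) = O(h^{m+1}) uniformly on compact sets, i.e. for every compact K there exists C with |e^{-ix·ζ/h}(-h²Δ)^m(e^{ix·ζ/h} a)(x)| ≤ C h^{m+1} for all x ∈ K and 0 < h ≤ 1. -/

import Mathlib

open Complex

noncomputable def pd {n : ℕ} (j : Fin n) (f : (Fin n → ℝ) → ℂ) (x : Fin n → ℝ) : ℂ :=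
  fderiv ℝ f x (Pi.single j 1)

noncomputable def lap {n : ℕ} (f : (Fin n → ℝ) → ℂ) (x : Fin n → ℝ) : ℂ :=
  ∑ j, pd j (fun y => pd j f y) x

/-- The directional derivative operator `ζ·∇`. -/
noncomputable def dirDeriv {n : ℕ} (ζ : Fin n → ℂ) (f : (Fin n → ℝ) → ℂ) :
    (Fin n → ℝ) → ℂ :=
  fun x => ∑ j, ζ j * pd j f x

section lemmas
variable {n : ℕ}

lemma contDiff_pd {f : (Fin n → ℝ) → ℂ} (hf : ContDiff ℝ (⊤ : ℕ∞) f) (j : Fin n) :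
    ContDiff ℝ (⊤ : ℕ∞) (pd j f) :=
  (hf.fderiv_right ((by simp))).clm_apply contDiff_const

lemma contDiff_lap {f : (Fin n → ℝ) → ℂ} (hf : ContDiff ℝ (⊤ : ℕ∞) f) :
    ContDiff ℝ (⊤ : ℕ∞) (lap f) := by
  have : ContDiff ℝ (⊤ : ℕ∞) (fun x => ∑ j, pd j (fun y => pd j f y) x) :=
    ContDiff.sum fun j _ => contDiff_pd (contDiff_pd hf j) j
  exact this

lemma contDiff_dirDeriv (ζ : Fin n → ℂ) {f : (Fin n → ℝ) → ℂ} (hf : ContDiff ℝ (⊤ : ℕ∞) f) :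
    ContDiff ℝ (⊤ : ℕ∞) (dirDeriv ζ f) :=
  ContDiff.sum fun j _ => contDiff_const.mul (contDiff_pd hf j)

lemma pd_add {f g : (Fin n → ℝ) → ℂ} (hf : Differentiable ℝ f) (hg : Differentiable ℝ g)
    (j : Fin n) (x : Fin n → ℝ) :
    pd j (fun y => f y + g y) x = pd j f x + pd j g x := by
  unfold pd
  rw [fderiv_fun_add (hf x) (hg x)]
  rfl

lemma pd_const_mul {f : (Fin n → ℝ) → ℂ} (hf : Differentiable ℝ f) (c : ℂ)
    (j : Fin n) (x : Fin n → ℝ) :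
    pd j (fun y => c * f y) x = c * pd j f x := by
  unfold pd
  rw [fderiv_const_mul (hf x) c]
  rfl

lemma pd_mul {f g : (Fin n → ℝ) → ℂ} (hf : Differentiable ℝ f) (hg : Differentiable ℝ g)
    (j : Fin n) (x : Fin n → ℝ) :
    pd j (fun y => f y * g y) x = pd j f x * g x + f x * pd j g x := by
  unfold pd
  rw [fderiv_fun_mul (hf x) (hg x)]
  simp only [ContinuousLinearMap.add_apply, ContinuousLinearMap.smul_apply, smul_eq_mul]
  ring

lemma pd_sum {ι : Type*} (s : Finset ι) {F : ι → (Fin n → ℝ) → ℂ}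
    (hF : ∀ i ∈ s, Differentiable ℝ (F i)) (j : Fin n) (x : Fin n → ℝ) :
    pd j (fun y => ∑ i ∈ s, F i y) x = ∑ i ∈ s, pd j (F i) x := by
  unfold pd
  rw [fderiv_fun_sum (fun i hi => (hF i hi) x)]
  simp

lemma pd_zero (j : Fin n) (x : Fin n → ℝ) : pd j (fun _ => (0 : ℂ)) x = 0 := by
  unfold pd
  rw [fderiv_fun_const]
  rfl

lemma lap_zero (x : Fin n → ℝ) : lap (fun _ => (0 : ℂ)) x = 0 := by
  unfold lap
  refine Finset.sum_eq_zero fun j _ => ?_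
  have h1 : (fun y => pd j (fun _ => (0:ℂ)) y) = fun _ => (0 : ℂ) := funext fun y => pd_zero j y
  rw [h1, pd_zero]

lemma lap_sum {ι : Type*} (s : Finset ι) {F : ι → (Fin n → ℝ) → ℂ}
    (hF : ∀ i ∈ s, ContDiff ℝ (⊤ : ℕ∞) (F i)) (x : Fin n → ℝ) :
    lap (fun y => ∑ i ∈ s, F i y) x = ∑ i ∈ s, lap (F i) x := by
  unfold lap
  rw [← Finset.sum_comm]
  refine Finset.sum_congr rfl fun j _ => ?_
  have h1 : (fun y => pd j (fun z => ∑ i ∈ s, F i z) y) = fun y => ∑ i ∈ s, pd j (F i) y :=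
    funext fun y => pd_sum s (fun i hi => (hF i hi).differentiable (by simp)) j y
  rw [h1, pd_sum s (fun i hi => (contDiff_pd (hF i hi) j).differentiable (by simp)) j x]

lemma lap_const_mul {f : (Fin n → ℝ) → ℂ} (hf : ContDiff ℝ (⊤ : ℕ∞) f) (c : ℂ) (x : Fin n → ℝ) :
    lap (fun y => c * f y) x = c * lap f x := by
  unfold lap
  rw [Finset.mul_sum]
  refine Finset.sum_congr rfl fun j _ => ?_
  have h1 : (fun y => pd j (fun z => c * f z) y) = fun y => c * pd j f y :=
    funext fun y => pd_const_mul (hf.differentiable (by simp)) c j y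
  rw [h1, pd_const_mul ((contDiff_pd hf j).differentiable (by simp)) c j x]

lemma dirDeriv_const_mul (ζ : Fin n → ℂ) {f : (Fin n → ℝ) → ℂ}
    (hf : Differentiable ℝ f) (c : ℂ) (x : Fin n → ℝ) :
    dirDeriv ζ (fun y => c * f y) x = c * dirDeriv ζ f x := by
  unfold dirDeriv
  rw [Finset.mul_sum]
  refine Finset.sum_congr rfl fun j _ => ?_
  rw [pd_const_mul hf c j x]
  ring

lemma dirDeriv_sum (ζ : Fin n → ℂ) {ι : Type*} (s : Finset ι) {F : ι → (Fin n → ℝ) → ℂ}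
    (hF : ∀ i ∈ s, Differentiable ℝ (F i)) (x : Fin n → ℝ) :
    dirDeriv ζ (fun y => ∑ i ∈ s, F i y) x = ∑ i ∈ s, dirDeriv ζ (F i) x := by
  unfold dirDeriv
  rw [← Finset.sum_comm]
  refine Finset.sum_congr rfl fun j _ => ?_
  rw [pd_sum s hF j x, Finset.mul_sum]

end lemmas

section phase
variable {n : ℕ}

noncomputable def phase (ζ : Fin n → ℂ) (h : ℝ) (x : Fin n → ℝ) : ℂ :=
  Complex.exp (I * (∑ j, (x j : ℂ) * ζ j) / (h : ℂ))

lemma hasFDerivAt_phase (ζ : Fin n → ℂ) (h : ℝ) (x : Fin n → ℝ) :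
    HasFDerivAt (phase ζ h)
      (Complex.exp (I * (∑ j, (x j : ℂ) * ζ j) / (h : ℂ)) •
        ((I / h) • (∑ j, (ContinuousLinearMap.proj (R := ℝ) (φ := fun _ : Fin n => ℝ) j).smulRight (ζ j)))) x := by
  have hS : HasFDerivAt (fun y : Fin n → ℝ => ∑ j, (y j : ℂ) * ζ j)
      (∑ j, (ContinuousLinearMap.proj (R := ℝ) (φ := fun _ : Fin n => ℝ) j).smulRight (ζ j)) x := by
    have : (fun y : Fin n → ℝ => ∑ j, (y j : ℂ) * ζ j)
        = fun y : Fin n → ℝ => ∑ j, (y j) • ζ j := by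
      funext y; refine Finset.sum_congr rfl fun j _ => ?_
      rw [Complex.real_smul]
    rw [this]
    exact HasFDerivAt.fun_sum fun j _ =>
      ((ContinuousLinearMap.proj (R := ℝ) (φ := fun _ : Fin n => ℝ) j).hasFDerivAt).smul_const (ζ j)
  have h2 : HasFDerivAt (fun y : Fin n → ℝ => I * (∑ j, (y j : ℂ) * ζ j) / (h : ℂ))
      ((I / h) • (∑ j, (ContinuousLinearMap.proj (R := ℝ) (φ := fun _ : Fin n => ℝ) j).smulRight (ζ j))) x := by
    have h3 := hS.const_mul (I / (h : ℂ))
    have e : (fun y : Fin n → ℝ => I * (∑ j, (y j : ℂ) * ζ j) / (h : ℂ))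
        = fun y : Fin n → ℝ => I / (h : ℂ) * ∑ j, (y j : ℂ) * ζ j := by
      funext y
      ring
    rw [e]
    exact h3
  exact h2.cexp

lemma contDiff_phase (ζ : Fin n → ℂ) (h : ℝ) : ContDiff ℝ (⊤ : ℕ∞) (phase ζ h) := by
  unfold phase
  refine ContDiff.cexp ?_
  refine ContDiff.div_const ?_ _
  refine ContDiff.mul contDiff_const ?_
  exact ContDiff.sum fun j _ =>
    (Complex.ofRealCLM.contDiff.comp ((ContinuousLinearMap.proj (R := ℝ) (φ := fun _ : Fin n => ℝ) j).contDiff)).mul contDiff_const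

lemma pd_phase (ζ : Fin n → ℂ) (h : ℝ) (j : Fin n) (x : Fin n → ℝ) :
    pd j (phase ζ h) x = (I * ζ j / h) * phase ζ h x := by
  unfold pd
  rw [(hasFDerivAt_phase ζ h x).fderiv]
  simp only [ContinuousLinearMap.smul_apply, ContinuousLinearMap.sum_apply,
    ContinuousLinearMap.smulRight_apply, ContinuousLinearMap.proj_apply, smul_eq_mul]
  have hsingle : (∑ k : Fin n, (Pi.single j (1:ℝ) : Fin n → ℝ) k • ζ k) = ζ j := by
    rw [Finset.sum_eq_single j (fun k _ hk => by simp [Pi.single_apply, hk]) (by simp)]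
    simp
  rw [hsingle]
  unfold phase
  ring
end phase

section conj
variable {n : ℕ}

lemma lap_phase_mul (ζ : Fin n → ℂ) (hζ : ∑ j, ζ j ^ 2 = 0) (h : ℝ)
    {f : (Fin n → ℝ) → ℂ} (hf : ContDiff ℝ (⊤ : ℕ∞) f) (x : Fin n → ℝ) :
    lap (fun y => phase ζ h y * f y) x
      = phase ζ h x * (2 * (I / h) * dirDeriv ζ f x + lap f x) := by
  have hEd : Differentiable ℝ (phase ζ h) := (contDiff_phase ζ h).differentiable (by simp)
  have hfd : Differentiable ℝ f := hf.differentiable (by simp)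
  have step1 : ∀ j (y : Fin n → ℝ), pd j (fun z => phase ζ h z * f z) y
      = phase ζ h y * ((I * ζ j / h) * f y + pd j f y) := by
    intro j y
    rw [pd_mul hEd hfd j y, pd_phase ζ h j y]
    ring
  unfold lap
  have step2 : ∀ j, pd j (fun y => pd j (fun z => phase ζ h z * f z) y) x
      = phase ζ h x * ((I * ζ j / h) ^ 2 * f x + 2 * (I * ζ j / h) * pd j f x
          + pd j (fun y => pd j f y) x) := by
    intro j
    have hg : Differentiable ℝ (fun y => (I * ζ j / h) * f y + pd j f y) :=
      ((hfd.const_mul _).add ((contDiff_pd hf j).differentiable (by simp)))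
    have e1 : (fun y => pd j (fun z => phase ζ h z * f z) y)
        = fun y => phase ζ h y * ((I * ζ j / h) * f y + pd j f y) :=
      funext fun y => step1 j y
    rw [e1, pd_mul hEd hg j x, pd_phase ζ h j x,
      pd_add (hfd.const_mul _) ((contDiff_pd hf j).differentiable (by simp)) j x,
      pd_const_mul hfd _ j x]
    ring
  rw [Finset.sum_congr rfl fun j _ => step2 j]
  have hc2 : ∑ j, (I * ζ j / (h:ℂ)) ^ 2 = 0 := by
    have : ∑ j, (I * ζ j / (h:ℂ)) ^ 2 = (I / h) ^ 2 * ∑ j, ζ j ^ 2 := by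
      rw [Finset.mul_sum]; refine Finset.sum_congr rfl fun j _ => by ring
    rw [this, hζ, mul_zero]
  have hsum : ∑ j, phase ζ h x * ((I * ζ j / (h:ℂ)) ^ 2 * f x + 2 * (I * ζ j / h) * pd j f x
      + pd j (fun y => pd j f y) x)
      = phase ζ h x * ((∑ j, (I * ζ j / (h:ℂ)) ^ 2) * f x
          + 2 * (I / h) * (∑ j, ζ j * pd j f x) + ∑ j, pd j (fun y => pd j f y) x) := by
    simp only [Finset.sum_mul, Finset.mul_sum, ← Finset.sum_add_distrib]
    exact Finset.sum_congr rfl fun j _ => by ring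
  rw [hsum, hc2]
  unfold dirDeriv
  ring

noncomputable def Qop (ζ : Fin n → ℂ) (h : ℝ) (f : (Fin n → ℝ) → ℂ) : (Fin n → ℝ) → ℂ :=
  fun y => -(h : ℂ) ^ 2 * lap f y - 2 * I * h * dirDeriv ζ f y

lemma contDiff_Qop (ζ : Fin n → ℂ) (h : ℝ) {f : (Fin n → ℝ) → ℂ} (hf : ContDiff ℝ (⊤ : ℕ∞) f) :
    ContDiff ℝ (⊤ : ℕ∞) (Qop ζ h f) :=
  (contDiff_const.mul (contDiff_lap hf)).sub (contDiff_const.mul (contDiff_dirDeriv ζ hf))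

lemma contDiff_Qop_iter (ζ : Fin n → ℂ) (h : ℝ) {f : (Fin n → ℝ) → ℂ}
    (hf : ContDiff ℝ (⊤ : ℕ∞) f) (k : ℕ) : ContDiff ℝ (⊤ : ℕ∞) ((Qop ζ h)^[k] f) := by
  induction k with
  | zero => exact hf
  | succ k ih => rw [Function.iterate_succ_apply']; exact contDiff_Qop ζ h ih

lemma conj_step (ζ : Fin n → ℂ) (hζ : ∑ j, ζ j ^ 2 = 0) {h : ℝ} (hh : h ≠ 0)
    {f : (Fin n → ℝ) → ℂ} (hf : ContDiff ℝ (⊤ : ℕ∞) f) :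
    (fun y => -(h : ℂ) ^ 2 * lap (fun z => phase ζ h z * f z) y)
      = fun y => phase ζ h y * Qop ζ h f y := by
  funext y
  rw [lap_phase_mul ζ hζ h hf y]
  unfold Qop
  have hch : (h : ℂ) ≠ 0 := by exact_mod_cast hh
  field_simp
  ring

lemma conj_iter (ζ : Fin n → ℂ) (hζ : ∑ j, ζ j ^ 2 = 0) {h : ℝ} (hh : h ≠ 0)
    {a : (Fin n → ℝ) → ℂ} (ha : ContDiff ℝ (⊤ : ℕ∞) a) (k : ℕ) :
    (fun f => fun y => -(h : ℂ) ^ 2 * lap f y)^[k] (fun y => phase ζ h y * a y)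
      = fun y => phase ζ h y * (Qop ζ h)^[k] a y := by
  induction k with
  | zero => rfl
  | succ k ih =>
    rw [Function.iterate_succ_apply', ih]
    rw [conj_step ζ hζ hh (contDiff_Qop_iter ζ h ha k), Function.iterate_succ_apply']
end conj

section Bff
variable {n : ℕ}

noncomputable def Bf (ζ : Fin n → ℂ) (a : (Fin n → ℝ) → ℂ) : ℕ → ℕ → ((Fin n → ℝ) → ℂ)
  | 0, 0 => a
  | 0, _+1 => fun _ => 0
  | k+1, 0 => fun y => -lap (Bf ζ a k 0) y
  | k+1, j+1 => fun y => -lap (Bf ζ a k (j+1)) y - 2 * I * dirDeriv ζ (Bf ζ a k j) y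

lemma dirDeriv_zero (ζ : Fin n → ℂ) (x : Fin n → ℝ) :
    dirDeriv ζ (fun _ => (0:ℂ)) x = 0 := by
  unfold dirDeriv
  refine Finset.sum_eq_zero fun j _ => ?_
  rw [pd_zero]; ring

lemma contDiff_Bf (ζ : Fin n → ℂ) {a : (Fin n → ℝ) → ℂ} (ha : ContDiff ℝ (⊤ : ℕ∞) a) :
    ∀ k j, ContDiff ℝ (⊤ : ℕ∞) (Bf ζ a k j) := by
  intro k
  induction k with
  | zero =>
    intro j
    match j with
    | 0 => exact ha
    | j+1 => exact contDiff_const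
  | succ k ih =>
    intro j
    match j with
    | 0 => exact (contDiff_lap (ih 0)).neg
    | j+1 =>
      exact ((contDiff_lap (ih (j+1))).neg).sub
        (contDiff_const.mul (contDiff_dirDeriv ζ (ih j)))

lemma Bf_eq_zero (ζ : Fin n → ℂ) (a : (Fin n → ℝ) → ℂ) :
    ∀ k j, k < j → Bf ζ a k j = fun _ => (0:ℂ) := by
  intro k
  induction k with
  | zero =>
    intro j hj
    match j, hj with
    | j+1, _ => rfl
  | succ k ih =>
    intro j hj
    match j, hj with
    | j+1, hj =>
      have h1 : k < j + 1 := by omega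
      have h2 : k < j := by omega
      show (fun y => -lap (Bf ζ a k (j+1)) y - 2 * I * dirDeriv ζ (Bf ζ a k j) y) = _
      funext y
      rw [ih (j+1) h1, ih j h2, lap_zero, dirDeriv_zero]
      ring

lemma Bf_diag (ζ : Fin n → ℂ) {a : (Fin n → ℝ) → ℂ} (ha : ContDiff ℝ (⊤ : ℕ∞) a) :
    ∀ k, Bf ζ a k k = fun y => (-2 * I) ^ k * (dirDeriv ζ)^[k] a y := by
  have hDi : ∀ k, ContDiff ℝ (⊤ : ℕ∞) ((dirDeriv ζ)^[k] a) := by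
    intro k
    induction k with
    | zero => exact ha
    | succ k ih => rw [Function.iterate_succ_apply']; exact contDiff_dirDeriv ζ ih
  intro k
  induction k with
  | zero =>
    funext y
    show Bf ζ a 0 0 y = _
    rw [show Bf ζ a 0 0 = a from rfl]
    simp
  | succ k ih =>
    show (fun y => -lap (Bf ζ a k (k+1)) y - 2 * I * dirDeriv ζ (Bf ζ a k k) y) = _
    funext y
    rw [Bf_eq_zero ζ a k (k+1) (Nat.lt_succ_self k), lap_zero, ih,
      dirDeriv_const_mul ζ ((hDi k).differentiable (by simp)) _ y,
      Function.iterate_succ_apply']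
    ring

lemma Qop_iter_eq (ζ : Fin n → ℂ) (h : ℝ) {a : (Fin n → ℝ) → ℂ} (ha : ContDiff ℝ (⊤ : ℕ∞) a)
    (k : ℕ) :
    (Qop ζ h)^[k] a
      = fun y => ∑ j ∈ Finset.range (k+1), (h:ℂ)^(2*k - j) * Bf ζ a k j y := by
  induction k with
  | zero => funext y; simp [Bf]
  | succ k ih =>
    funext y
    rw [Function.iterate_succ_apply', ih]
    show Qop ζ h (fun z => ∑ j ∈ Finset.range (k+1), (h:ℂ)^(2*k - j) * Bf ζ a k j z) y = _
    have hsm : ∀ j ∈ Finset.range (k+1),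
        ContDiff ℝ (⊤ : ℕ∞) (fun z => (h:ℂ)^(2*k - j) * Bf ζ a k j z) :=
      fun j _ => contDiff_const.mul (contDiff_Bf ζ ha k j)
    unfold Qop
    rw [lap_sum _ hsm y, dirDeriv_sum ζ _ (fun j hj => (hsm j hj).differentiable (by simp)) y]
    rw [Finset.sum_congr rfl (fun j (_ : j ∈ Finset.range (k+1)) =>
      lap_const_mul (contDiff_Bf ζ ha k j) ((h:ℂ)^(2*k-j)) y)]
    rw [Finset.sum_congr rfl (fun j (_ : j ∈ Finset.range (k+1)) =>
      dirDeriv_const_mul ζ ((contDiff_Bf ζ ha k j).differentiable (by simp)) ((h:ℂ)^(2*k-j)) y)]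
    have e1 : -(h:ℂ)^2 * (∑ j ∈ Finset.range (k+1), (h:ℂ)^(2*k-j) * lap (Bf ζ a k j) y)
        = ∑ j ∈ Finset.range (k+1), (h:ℂ)^(2*(k+1)-j) * (-lap (Bf ζ a k j) y) := by
      rw [Finset.mul_sum]
      refine Finset.sum_congr rfl fun j hj => ?_
      have hjk : j ≤ k := Nat.lt_succ_iff.mp (Finset.mem_range.mp hj)
      have h2 : 2*(k+1) - j = (2*k - j) + 2 := by omega
      rw [h2, pow_add]; ring
    have e2 : 2 * I * (h:ℂ) * (∑ j ∈ Finset.range (k+1), (h:ℂ)^(2*k-j) * dirDeriv ζ (Bf ζ a k j) y)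
        = ∑ j ∈ Finset.range (k+1), (h:ℂ)^(2*k+1-j) * (2 * I * dirDeriv ζ (Bf ζ a k j) y) := by
      rw [Finset.mul_sum]
      refine Finset.sum_congr rfl fun j hj => ?_
      have hjk : j ≤ k := Nat.lt_succ_iff.mp (Finset.mem_range.mp hj)
      have h2 : 2*k+1 - j = (2*k - j) + 1 := by omega
      rw [h2, pow_add]; ring
    rw [mul_comm (2 * I) (h:ℂ)] at e2
    rw [show -(h:ℂ)^2 * (∑ j ∈ Finset.range (k+1), (h:ℂ)^(2*k-j) * lap (Bf ζ a k j) y)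
          - 2 * I * (h:ℂ) * (∑ j ∈ Finset.range (k+1), (h:ℂ)^(2*k-j) * dirDeriv ζ (Bf ζ a k j) y)
        = -(h:ℂ)^2 * (∑ j ∈ Finset.range (k+1), (h:ℂ)^(2*k-j) * lap (Bf ζ a k j) y)
          - (h:ℂ) * (2 * I) * (∑ j ∈ Finset.range (k+1), (h:ℂ)^(2*k-j) * dirDeriv ζ (Bf ζ a k j) y)
        from by ring, e1, e2]
    rw [Finset.sum_range_succ' (fun j => (h:ℂ)^(2*(k+1)-j) * Bf ζ a (k+1) j y) (k+1)]
    have e3 : ∀ j ∈ Finset.range (k+1),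
        (h:ℂ)^(2*(k+1)-(j+1)) * Bf ζ a (k+1) (j+1) y
        = (h:ℂ)^(2*(k+1)-(j+1)) * (-lap (Bf ζ a k (j+1)) y)
          - (h:ℂ)^(2*k+1-j) * (2 * I * dirDeriv ζ (Bf ζ a k j) y) := by
      intro j hj
      have hB : Bf ζ a (k+1) (j+1) y
          = -lap (Bf ζ a k (j+1)) y - 2 * I * dirDeriv ζ (Bf ζ a k j) y := rfl
      have h2 : 2*(k+1) - (j+1) = 2*k+1-j := by omega
      rw [hB, h2]; ring
    rw [Finset.sum_congr rfl e3, Finset.sum_sub_distrib]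
    have e4 : (∑ j ∈ Finset.range (k+1), (h:ℂ)^(2*(k+1)-(j+1)) * (-lap (Bf ζ a k (j+1)) y))
        + (h:ℂ)^(2*(k+1)-0) * Bf ζ a (k+1) 0 y
        = ∑ j ∈ Finset.range (k+1), (h:ℂ)^(2*(k+1)-j) * (-lap (Bf ζ a k j) y) := by
      have hB0 : Bf ζ a (k+1) 0 y = -lap (Bf ζ a k 0) y := rfl
      rw [hB0]
      rw [← Finset.sum_range_succ' (fun j => (h:ℂ)^(2*(k+1)-j) * (-lap (Bf ζ a k j) y)) (k+1)]
      rw [Finset.sum_range_succ]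
      rw [Bf_eq_zero ζ a k (k+1) (Nat.lt_succ_self k), lap_zero]
      ring
    rw [← e4]
    ring
end Bff


theorem stmt3 {n : ℕ} (ζ : Fin n → ℂ) (hζ : ∑ j, ζ j ^ 2 = 0)
    (a : (Fin n → ℝ) → ℂ) (ha : ContDiff ℝ (⊤ : ℕ∞) a) (m : ℕ) (hm : 1 ≤ m)
    (htransport : (dirDeriv ζ)^[m] a = 0) :
    ∀ K : Set (Fin n → ℝ), IsCompact K → ∃ C : ℝ, ∀ x ∈ K, ∀ h : ℝ, 0 < h → h ≤ 1 →
      ‖Complex.exp (-I * (∑ j, (x j : ℂ) * ζ j) / (h : ℂ)) *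
        ((fun f => fun y => -(h : ℂ) ^ 2 * lap f y)^[m]
          (fun y => Complex.exp (I * (∑ j, (y j : ℂ) * ζ j) / (h : ℂ)) * a y) x)‖
        ≤ C * h ^ (m + 1) := by
  intro K hK
  have hbnd : ∀ j : ℕ, ∃ Cj : ℝ, 0 ≤ Cj ∧ ∀ x ∈ K, ‖Bf ζ a m j x‖ ≤ Cj := by
    intro j
    obtain ⟨Cj, hCj⟩ := hK.exists_bound_of_continuousOn
      ((contDiff_Bf ζ ha m j).continuous.continuousOn)
    exact ⟨max Cj 0, le_max_right _ _, fun x hx => le_trans (hCj x hx) (le_max_left _ _)⟩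
  choose Cf hCf0 hCf using hbnd
  refine ⟨∑ j ∈ Finset.range m, Cf j, fun x hx h hpos hle => ?_⟩
  have hh : h ≠ 0 := ne_of_gt hpos
  rw [show (fun y : Fin n → ℝ => Complex.exp (I * (∑ j, ((y j : ℝ) : ℂ) * ζ j) / (h:ℂ)) * a y)
      = (fun y => phase ζ h y * a y) from rfl]
  rw [conj_iter ζ hζ hh ha m]
  have hone : Complex.exp (-I * (∑ j, (x j : ℂ) * ζ j) / (h:ℂ)) * phase ζ h x = 1 := by
    unfold phase
    rw [← Complex.exp_add, show -I * (∑ j, (x j : ℂ) * ζ j) / (h:ℂ)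
      + I * (∑ j, (x j : ℂ) * ζ j) / (h:ℂ) = 0 by ring]
    exact Complex.exp_zero
  rw [show Complex.exp (-I * (∑ j, (x j : ℂ) * ζ j) / (h:ℂ))
      * ((fun y => phase ζ h y * (Qop ζ h)^[m] a y) x)
      = (Complex.exp (-I * (∑ j, (x j : ℂ) * ζ j) / (h:ℂ)) * phase ζ h x)
        * (Qop ζ h)^[m] a x by ring, hone, one_mul]
  rw [Qop_iter_eq ζ h ha m]
  have hlast : (h:ℂ)^(2*m - m) * Bf ζ a m m x = 0 := by
    rw [Bf_diag ζ ha m, htransport]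
    simp
  rw [show (fun y => ∑ j ∈ Finset.range (m+1), (h:ℂ)^(2*m - j) * Bf ζ a m j y) x
      = ∑ j ∈ Finset.range (m+1), (h:ℂ)^(2*m - j) * Bf ζ a m j x from rfl,
    Finset.sum_range_succ, hlast, add_zero]
  calc ‖∑ j ∈ Finset.range m, (h:ℂ)^(2*m - j) * Bf ζ a m j x‖
      ≤ ∑ j ∈ Finset.range m, ‖(h:ℂ)^(2*m - j) * Bf ζ a m j x‖ := norm_sum_le _ _
    _ ≤ ∑ j ∈ Finset.range m, Cf j * h ^ (m+1) := by
        refine Finset.sum_le_sum fun j hj => ?_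
        have hjm : j < m := Finset.mem_range.mp hj
        rw [norm_mul, norm_pow, Complex.norm_real, Real.norm_eq_abs, abs_of_pos hpos]
        have h1 : h ^ (2*m - j) ≤ h ^ (m+1) :=
          pow_le_pow_of_le_one hpos.le hle (by omega)
        calc h ^ (2*m - j) * ‖Bf ζ a m j x‖
            ≤ h ^ (m+1) * Cf j :=
              mul_le_mul h1 (hCf j x hx) (norm_nonneg _) (pow_nonneg hpos.le _)
          _ = Cf j * h ^ (m+1) := mul_comm _ _
    _ = (∑ j ∈ Finset.range m, Cf j) * h ^ (m+1) := (Finset.sum_mul _ _ _).symm
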